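/- Let p, q : ℝ^d → (0,∞) be twice continuously differentiable Lebesgue probability densities and let w : ℝ^d → [0,∞) be continuously differentiable with compact support. Define the multivariate weighted Hyvärinen score Ŝ(p,x;w) = Σ_{i=1}^d [2·(∂_i² p(x)/p(x))·w(x) − (∂_i p(x)/p(x))²·w(x) + 2·(∂_i p(x)/p(x))·∂_i w(x)]. Then ∫_{ℝ^d} Ŝ(p,x;w)·q(x) dx − ∫_{ℝ^d} Ŝ(q,x;w)·q(x) dx = ∫_{ℝ^d} Σ_{i=1}^d (∂_i p(x)/p(x) − ∂_i q(x)/q(x))²·q(x)·w(x) dx ≥ 0. -/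

import Mathlib

/-!
With `s f = ∂ᵢf / f`, the integrand `Ŝ(p,·;w) q − Ŝ(q,·;w) q` is, pointwise, the sum of
`Σᵢ (s p − s q)² q w` and twice the divergence of the vector field `q w (s p − s q)`.
That field is `C¹` with compact support (it carries the factor `w`), so its divergence
integrates to zero by integration by parts against the constant `1`; what remains is
nonnegative because `q` and `w` are.
-/

open MeasureTheory

noncomputable section

/-- The `i`-th partial derivative of `f : (Fin d → ℝ) → ℝ`. -/
def pder {d : ℕ} (i : Fin d) (f : (Fin d → ℝ) → ℝ) (x : Fin d → ℝ) : ℝ :=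
  fderiv ℝ f x (Pi.single i 1)

/-- The multivariate weighted Hyvärinen score
`Ŝ(f,x;w) = Σ_i [2·(∂_i²f(x)/f(x))·w(x) − (∂_i f(x)/f(x))²·w(x) + 2·(∂_i f(x)/f(x))·∂_i w(x)]`. -/
def ShatD {d : ℕ} (w f : (Fin d → ℝ) → ℝ) (x : Fin d → ℝ) : ℝ :=
  ∑ i : Fin d,
    (2 * (pder i (pder i f) x / f x) * w x - (pder i f x / f x) ^ 2 * w x
      + 2 * (pder i f x / f x) * pder i w x)

open Function

section PartialDerivative

variable {d : ℕ} (i : Fin d) {f g : (Fin d → ℝ) → ℝ}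

lemma pder_mul {x : Fin d → ℝ} (hf : DifferentiableAt ℝ f x) (hg : DifferentiableAt ℝ g x) :
    pder i (fun y => f y * g y) x = pder i f x * g x + f x * pder i g x := by
  simp only [pder, fderiv_fun_mul hf hg, add_apply, smul_apply, smul_eq_mul]
  ring

lemma pder_sub {x : Fin d → ℝ} (hf : DifferentiableAt ℝ f x) (hg : DifferentiableAt ℝ g x) :
    pder i (fun y => f y - g y) x = pder i f x - pder i g x := by
  simp only [pder, fderiv_fun_sub hf hg, sub_apply]

lemma pder_inv {x : Fin d → ℝ} (hg : DifferentiableAt ℝ g x) (hgx : g x ≠ 0) :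
    pder i (fun y => (g y)⁻¹) x = -pder i g x / g x ^ 2 := by
  have := fderiv_comp x (differentiableAt_inv hgx) hg
  simp only [pder, comp_def] at this ⊢
  rw [this, ContinuousLinearMap.comp_apply, fderiv_inv]
  simp only [ContinuousLinearMap.toSpanSingleton_apply, smul_eq_mul, mul_neg]
  ring

lemma pder_div {x : Fin d → ℝ} (hf : DifferentiableAt ℝ f x) (hg : DifferentiableAt ℝ g x)
    (hgx : g x ≠ 0) :
    pder i (fun y => f y / g y) x = (pder i f x * g x - f x * pder i g x) / g x ^ 2 := by
  simp only [div_eq_mul_inv]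
  rw [pder_mul i hf (hg.fun_inv hgx), pder_inv i hg hgx]
  field_simp
  ring

lemma ContDiff.pder {m n : WithTop ℕ∞} (hf : ContDiff ℝ n f) (hmn : m + 1 ≤ n) :
    ContDiff ℝ m (pder i f) :=
  (hf.fderiv_right hmn).clm_apply contDiff_const

lemma support_pder_subset (f : (Fin d → ℝ) → ℝ) : support (pder i f) ⊆ tsupport f :=
  fun x hx => support_fderiv_subset ℝ fun h => hx (by simp [pder, h])

lemma HasCompactSupport.pder (hf : HasCompactSupport f) : HasCompactSupport (pder i f) :=
  hf.fderiv_apply ℝ _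

lemma integrable_pder (hf : ContDiff ℝ 1 f) (hfs : HasCompactSupport f) :
    Integrable (pder i f) :=
  (hf.pder i (m := 0) le_rfl).continuous.integrable_of_hasCompactSupport (hfs.pder i)

lemma integral_pder_eq_zero (hf : ContDiff ℝ 1 f) (hfs : HasCompactSupport f) :
    ∫ x, pder i f x = 0 := by
  have := integral_mul_fderiv_eq_neg_fderiv_mul_of_integrable (μ := volume)
    (f := fun _ => (1 : ℝ)) (g := f) (v := Pi.single i 1)
    (by simp) (by simp only [one_mul]; exact integrable_pder i hf hfs)
    (by simpa using hf.continuous.integrable_of_hasCompactSupport hfs)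
    (fun x _ => differentiableAt_const _) (fun x _ => hf.differentiable one_ne_zero x)
  simpa [pder] using this

lemma integral_sum_pder_eq_zero {F : Fin d → (Fin d → ℝ) → ℝ}
    (hF : ∀ i, ContDiff ℝ 1 (F i)) (hFs : ∀ i, HasCompactSupport (F i)) :
    ∫ x, ∑ i : Fin d, pder i (F i) x = 0 := by
  rw [integral_finsetSum _ fun i _ => integrable_pder i (hF i) (hFs i)]
  exact Finset.sum_eq_zero fun i _ => integral_pder_eq_zero i (hF i) (hFs i)

end PartialDerivative

section Hyvarinen

variable {d : ℕ} {p q w f : (Fin d → ℝ) → ℝ}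

lemma pder_pder_div_self (i : Fin d) (hf : ContDiff ℝ 2 f) {x : Fin d → ℝ} (hfx : f x ≠ 0) :
    pder i (fun y => pder i f y / f y) x
      = pder i (pder i f) x / f x - (pder i f x / f x) ^ 2 := by
  rw [pder_div i ((hf.pder i le_rfl).differentiable one_ne_zero x)
    (hf.differentiable two_ne_zero x) hfx]
  field_simp

lemma shatD_mul_sub_shatD_mul (hp : ContDiff ℝ 2 p) (hq : ContDiff ℝ 2 q)
    (hw : ContDiff ℝ 1 w) {x : Fin d → ℝ} (hpx : p x ≠ 0) (hqx : q x ≠ 0) :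
    ShatD w p x * q x - ShatD w q x * q x
      = (∑ i : Fin d, (pder i p x / p x - pder i q x / q x) ^ 2) * q x * w x
        + 2 * ∑ i : Fin d,
          pder i (fun y => q y * w y * (pder i p y / p y - pder i q y / q y)) x := by
  simp only [ShatD, Finset.mul_sum, Finset.sum_mul, ← Finset.sum_sub_distrib,
    ← Finset.sum_add_distrib]
  refine Finset.sum_congr rfl fun i _ => ?_
  have hqd := hq.differentiable two_ne_zero
  have hwd := hw.differentiable one_ne_zero
  have hscore : ∀ f : (Fin d → ℝ) → ℝ, ContDiff ℝ 2 f → f x ≠ 0 →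
      DifferentiableAt ℝ (fun y => pder i f y / f y) x := fun f hf hfx =>
    (((hf.pder i le_rfl).contDiffAt.div (hf.of_le one_le_two).contDiffAt hfx).differentiableAt
      one_ne_zero)
  rw [pder_mul i ((hqd x).fun_mul (hwd x)) ((hscore p hp hpx).fun_sub (hscore q hq hqx)),
    pder_mul i (hqd x) (hwd x), pder_sub i (hscore p hp hpx) (hscore q hq hqx),
    pder_pder_div_self i hp hpx, pder_pder_div_self i hq hqx]
  field_simp
  ring

lemma continuous_shatD (hf : ContDiff ℝ 2 f) (hf0 : ∀ x, f x ≠ 0) (hw : ContDiff ℝ 1 w) :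
    Continuous (ShatD w f) := by
  refine continuous_finsetSum _ fun i _ => ?_
  have hfc := hf.continuous
  have hwc := hw.continuous
  have hf1 : ContDiff ℝ 1 (pder i f) := hf.pder i le_rfl
  have hf1c := hf1.continuous
  have hf2c : Continuous (pder i (pder i f)) := (hf1.pder i (m := 0) le_rfl).continuous
  have hw1c : Continuous (pder i w) := (hw.pder i (m := 0) le_rfl).continuous
  fun_prop (disch := exact hf0 _)

lemma support_shatD_subset : support (ShatD w f) ⊆ tsupport w := by
  intro x hx
  by_contra hxw
  have hdw : ∀ i : Fin d, pder i w x = 0 := fun i =>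
    notMem_support.1 fun h => hxw (support_pder_subset i w h)
  exact hx (by simp [ShatD, image_eq_zero_of_notMem_tsupport hxw, hdw])

lemma integrable_shatD_mul (hf : ContDiff ℝ 2 f) (hf0 : ∀ x, f x ≠ 0) (hw : ContDiff ℝ 1 w)
    (hws : HasCompactSupport w) (hq : Continuous q) :
    Integrable (fun x => ShatD w f x * q x) :=
  ((continuous_shatD hf hf0 hw).mul hq).integrable_of_hasCompactSupport
    (hws.mono' support_shatD_subset).mul_right

end Hyvarinen

theorem multivariate_weighted_hyvarinen_divergence_general
    {d : ℕ} (p q w : (Fin d → ℝ) → ℝ)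
    (hp : ContDiff ℝ 2 p) (hq : ContDiff ℝ 2 q)
    (hppos : ∀ x, 0 < p x) (hqpos : ∀ x, 0 < q x)
    (hw : ContDiff ℝ 1 w) (hwpos : ∀ x, 0 ≤ w x) (hwsupp : HasCompactSupport w) :
    (∫ x, ShatD w p x * q x) - (∫ x, ShatD w q x * q x)
        = ∫ x, (∑ i : Fin d, (pder i p x / p x - pder i q x / q x) ^ 2) * q x * w x ∧
      0 ≤ ∫ x, (∑ i : Fin d, (pder i p x / p x - pder i q x / q x) ^ 2) * q x * w x := by
  have hp0 : ∀ x, p x ≠ 0 := fun x => (hppos x).ne'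
  have hq0 : ∀ x, q x ≠ 0 := fun x => (hqpos x).ne'
  have hscore : ∀ i : Fin d,
      ContDiff ℝ 1 fun x => pder i p x / p x - pder i q x / q x := fun i =>
    ((hp.pder i le_rfl).div (hp.of_le one_le_two) hp0).sub
      ((hq.pder i le_rfl).div (hq.of_le one_le_two) hq0)
  set F : Fin d → (Fin d → ℝ) → ℝ :=
    fun i y => q y * w y * (pder i p y / p y - pder i q y / q y)
  have hF : ∀ i, ContDiff ℝ 1 (F i) := fun i => ((hq.of_le one_le_two).mul hw).mul (hscore i)
  have hFs : ∀ i, HasCompactSupport (F i) := fun i => hwsupp.mul_left.mul_right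
  have hgap : Integrable fun x =>
      (∑ i : Fin d, (pder i p x / p x - pder i q x / q x) ^ 2) * q x * w x := by
    refine Continuous.integrable_of_hasCompactSupport ?_ hwsupp.mul_left
    have := fun i => (hscore i).continuous
    fun_prop
  have hdiv : Integrable fun x => 2 * ∑ i : Fin d, pder i (F i) x :=
    (integrable_finsetSum _ fun i _ => integrable_pder i (hF i) (hFs i)).const_mul 2
  refine ⟨?_, integral_nonneg fun x => ?_⟩
  · rw [← integral_sub (integrable_shatD_mul hp hp0 hw hwsupp hq.continuous)
      (integrable_shatD_mul hq hq0 hw hwsupp hq.continuous),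
      funext fun x => shatD_mul_sub_shatD_mul hp hq hw (hp0 x) (hq0 x),
      integral_add hgap hdiv, integral_const_mul, integral_sum_pder_eq_zero hF hFs, mul_zero,
      add_zero]
  · have := (hqpos x).le
    have := hwpos x
    positivity

/-- For twice continuously differentiable positive Lebesgue probability
densities `p, q` on `ℝ^d` and a continuously differentiable nonnegative weight function `w`
with compact support, the expected multivariate weighted Hyvärinen score difference under
`q` equals `∫ Σ_i (∂_i p/p − ∂_i q/q)²·q·w ≥ 0`. -/
theorem multivariate_weighted_hyvarinen_divergence
    {d : ℕ} (p q w : (Fin d → ℝ) → ℝ)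
    (hp : ContDiff ℝ 2 p) (hq : ContDiff ℝ 2 q)
    (hppos : ∀ x, 0 < p x) (hqpos : ∀ x, 0 < q x)
    (hpInt : ∫ x, p x = 1) (hqInt : ∫ x, q x = 1)
    (hw : ContDiff ℝ 1 w) (hwpos : ∀ x, 0 ≤ w x) (hwsupp : HasCompactSupport w) :
    (∫ x, ShatD w p x * q x) - (∫ x, ShatD w q x * q x)
        = ∫ x, (∑ i : Fin d, (pder i p x / p x - pder i q x / q x) ^ 2) * q x * w x ∧
      0 ≤ ∫ x, (∑ i : Fin d, (pder i p x / p x - pder i q x / q x) ^ 2) * q x * w x :=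
  multivariate_weighted_hyvarinen_divergence_general p q w hp hq hppos hqpos hw hwpos hwsupp

end
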